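/- arXiv:1212.4442 — 6 statements merged into one kernel-verified Lean document; each statement's English description precedes it below -/
import Mathlib

section
/- For n odd, the polytope DP_n = conv{M_σ : σ ∈ D_n} is affinely isomorphic to the polytope Q_n, the convex hull of the 2n row vectors in ℝ^{n²} given by the rows of the block matrix [[I,I,...,I],[I,R,R²,...,R^{n-1}]]. -/
open Matrix Finset

variable (n : ℕ) [NeZero n]

/-- Permutation matrix of `σ`: entries `δ_{i, σ(j)}`. -/
def permMat (σ : Equiv.Perm (ZMod n)) : Matrix (ZMod n) (ZMod n) ℝ :=
  Matrix.of fun i j => if i = σ j then 1 else 0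

/-- Rotation `x ↦ x + 1` of the regular n-gon with vertex set `ZMod n`. -/
def rot : Equiv.Perm (ZMod n) := Equiv.addRight 1

/-- Reflection `x ↦ -x` of the regular n-gon. -/
def rfl' : Equiv.Perm (ZMod n) := Equiv.neg (ZMod n)

/-- The dihedral group `D_n ≤ S_n`, symmetries of the regular n-gon. -/
def dihedral : Subgroup (Equiv.Perm (ZMod n)) := Subgroup.closure {rot n, rfl' n}

/-- Adjacency matrix of the n-cycle `C_n`. -/
def cycAdj : Matrix (ZMod n) (ZMod n) ℝ :=
  Matrix.of fun i j => if j = i + 1 ∨ j = i - 1 then 1 else 0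

/-- The permutation polytope `DP_n = conv{M_σ : σ ∈ D_n} ⊆ ℝ^{n×n}`. -/
def DP : Set (Matrix (ZMod n) (ZMod n) ℝ) :=
  convexHull ℝ {M | ∃ σ ∈ dihedral n, M = permMat n σ}

/-- The cyclic shift matrix `R`. -/
def Rmat : Matrix (ZMod n) (ZMod n) ℝ := Matrix.of fun i j => if j = i + 1 then 1 else 0

/-- The `2n` rows of `W = [[I,...,I],[I,R,...,R^{n-1}]]`, viewed as vectors in
`ℝ^{n²} = Matrix (ZMod n) (ZMod n) ℝ`; the first matrix coordinate is the block index. -/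
def Wrow : Bool × ZMod n → Matrix (ZMod n) (ZMod n) ℝ
  | (false, k) => Matrix.of fun _ j => if j = k then 1 else 0
  | (true, k) => Matrix.of fun b j => (Rmat n ^ b.val) k j

/-- The polytope `Q_n ⊆ ℝ^{n²}`. -/
def Qpoly : Set (Matrix (ZMod n) (ZMod n) ℝ) := convexHull ℝ (Set.range (Wrow n))

/-- A point of `ℝ^{n²}` is a lattice point if all its coordinates are integers. -/
def IsInt (x : Matrix (ZMod n) (ZMod n) ℝ) : Prop := ∀ b j, ∃ z : ℤ, x b j = (z : ℝ)

/-! ### Auxiliary lemmas -/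

lemma Rmat_pow (m : ℕ) :
    Rmat n ^ m = Matrix.of (fun i j => if j = i + (m : ZMod n) then 1 else 0) := by
  induction m with
  | zero => ext i j; simp [Matrix.one_apply, eq_comm]
  | succ m ih =>
    rw [pow_succ, ih]
    ext i j
    simp only [Matrix.mul_apply, Matrix.of_apply, Rmat, ite_mul, one_mul, zero_mul]
    rw [Finset.sum_ite_eq' Finset.univ (i + (m : ZMod n))]
    push_cast
    simp [add_assoc]

/-- The subgroup of maps `x ↦ x + k` and `x ↦ -x + k`. -/
def affSub : Subgroup (Equiv.Perm (ZMod n)) where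
  carrier := {σ | ∃ k : ZMod n, σ = Equiv.addRight k ∨ σ = Equiv.addRight k * rfl' n}
  one_mem' := ⟨0, Or.inl (by ext x; simp)⟩
  mul_mem' := by
    rintro a b ⟨k, hk | hk⟩ ⟨l, hl | hl⟩ <;> subst hk hl
    · exact ⟨l + k, Or.inl (by ext x; simp [Equiv.Perm.mul_apply]; try ring)⟩
    · exact ⟨l + k, Or.inr (by ext x; simp [Equiv.Perm.mul_apply, rfl']; try ring)⟩
    · exact ⟨k - l, Or.inr (by ext x; simp [Equiv.Perm.mul_apply, rfl']; try ring)⟩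
    · exact ⟨k - l, Or.inl (by ext x; simp [Equiv.Perm.mul_apply, rfl']; try ring)⟩
  inv_mem' := by
    rintro a ⟨k, hk | hk⟩ <;> subst hk
    · refine ⟨-k, Or.inl ?_⟩
      rw [eq_comm, eq_inv_iff_mul_eq_one]
      ext x; simp [Equiv.Perm.mul_apply]
    · refine ⟨k, Or.inr ?_⟩
      rw [eq_comm, eq_inv_iff_mul_eq_one]
      ext x; simp [Equiv.Perm.mul_apply, rfl']

lemma rot_pow (m : ℕ) : rot n ^ m = Equiv.addRight (m : ZMod n) := by
  induction m with
  | zero => ext x; simp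
  | succ m ih => ext x; simp [pow_succ, ih, Equiv.Perm.mul_apply, rot]; ring

lemma mem_dihedral (σ : Equiv.Perm (ZMod n)) :
    σ ∈ dihedral n ↔ ∃ k : ZMod n, σ = Equiv.addRight k ∨ σ = Equiv.addRight k * rfl' n := by
  constructor
  · intro h
    have : dihedral n ≤ affSub n := by
      rw [dihedral, Subgroup.closure_le]
      rintro x (rfl | rfl)
      · exact ⟨1, Or.inl rfl⟩
      · exact ⟨0, Or.inr (by ext x; simp [Equiv.Perm.mul_apply, rfl'])⟩
    exact this h
  · have hr : ∀ k : ZMod n, Equiv.addRight k ∈ dihedral n := by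
      intro k
      have : rot n ^ k.val ∈ dihedral n :=
        pow_mem (Subgroup.subset_closure (by simp)) _
      rwa [rot_pow, ZMod.natCast_val, ZMod.cast_id] at this
    rintro ⟨k, rfl | rfl⟩
    · exact hr k
    · exact mul_mem (hr k) (Subgroup.subset_closure (by simp))

/-- The forward coordinate-relabelling linear map `(T x)(b,c) = x(c - h·b, h·b)`. -/
def Tmap (h : ZMod n) : Matrix (ZMod n) (ZMod n) ℝ →ₗ[ℝ] Matrix (ZMod n) (ZMod n) ℝ where
  toFun x := Matrix.of fun b c => x (c - h * b) (h * b)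
  map_add' _ _ := rfl
  map_smul' _ _ := rfl

/-- The backward coordinate-relabelling linear map `(U y)(i,j) = y(2·j, i + j)`. -/
def Umap : Matrix (ZMod n) (ZMod n) ℝ →ₗ[ℝ] Matrix (ZMod n) (ZMod n) ℝ where
  toFun y := Matrix.of fun i j => y (2 * j) (i + j)
  map_add' _ _ := rfl
  map_smul' _ _ := rfl

/-- for odd `n`, `DP_n` is affinely isomorphic to `Q_n`. -/
theorem DP_affineIso_Q_of_odd (n : ℕ) [NeZero n] (hn : 3 ≤ n) (ho : Odd n) :
    ∃ f : Matrix (ZMod n) (ZMod n) ℝ ≃ᵃ[ℝ] Matrix (ZMod n) (ZMod n) ℝ,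
      f '' DP n = Qpoly n := by
  obtain ⟨m, hm⟩ := ho
  set h : ZMod n := ((m + 1 : ℕ) : ZMod n) with hh
  have h2 : (2 : ZMod n) * h = 1 := by
    have hn1 : (2 * (m + 1) : ℕ) = n + 1 := by omega
    calc (2 : ZMod n) * h = ((2 * (m + 1) : ℕ) : ZMod n) := by rw [hh]; push_cast; ring
      _ = ((n + 1 : ℕ) : ZMod n) := by rw [hn1]
      _ = 1 := by push_cast; simp
  have e1 : ∀ j : ZMod n, h * (2 * j) = j := by
    intro j; rw [show h * (2 * j) = (2 : ZMod n) * h * j by ring, h2, one_mul]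
  have e2 : ∀ b : ZMod n, 2 * (h * b) = b := by
    intro b; rw [← mul_assoc, h2, one_mul]
  let T : Matrix (ZMod n) (ZMod n) ℝ ≃ₗ[ℝ] Matrix (ZMod n) (ZMod n) ℝ :=
    LinearEquiv.ofLinear (Tmap n h) (Umap n)
      (by
        apply LinearMap.ext; intro y
        funext b c
        show (Umap n y) (c - h * b) (h * b) = y b c
        show y (2 * (h * b)) (c - h * b + h * b) = y b c
        rw [e2, sub_add_cancel])
      (by
        apply LinearMap.ext; intro x
        funext i j
        show (Tmap n h x) (2 * j) (i + j) = x i j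
        show x (i + j - h * (2 * j)) (h * (2 * j)) = x i j
        rw [e1, add_sub_cancel_right])
  have key1 : ∀ k : ZMod n, Tmap n h (permMat n (Equiv.addRight k)) = Wrow n (true, k) := by
    intro k
    funext b c
    show (if c - h * b = (h * b) + k then (1 : ℝ) else 0) = (Rmat n ^ b.val) k c
    rw [Rmat_pow]
    show _ = if c = k + ((b.val : ℕ) : ZMod n) then (1 : ℝ) else 0
    rw [ZMod.natCast_val, ZMod.cast_id]
    refine if_congr ?_ rfl rfl
    constructor <;> intro hx
    · linear_combination hx + b * h2
    · linear_combination hx - b * h2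
  have key2 : ∀ k : ZMod n,
      Tmap n h (permMat n (Equiv.addRight k * rfl' n)) = Wrow n (false, k) := by
    intro k
    funext b c
    show (if c - h * b = (Equiv.addRight k * rfl' n) (h * b) then (1 : ℝ) else 0)
      = if c = k then (1 : ℝ) else 0
    have : (Equiv.addRight k * rfl' n) (h * b) = -(h * b) + k := by
      simp [Equiv.Perm.mul_apply, rfl']
    rw [this]
    refine if_congr ?_ rfl rfl
    constructor <;> intro hx
    · linear_combination hx
    · linear_combination hx
  refine ⟨T.toAffineEquiv, ?_⟩
  have hcoe : ⇑T.toAffineEquiv = ⇑(Tmap n h) := rfl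
  rw [hcoe, DP, Qpoly, (Tmap n h).image_convexHull]
  congr 1
  ext A
  constructor
  · rintro ⟨M, ⟨σ, hσ, rfl⟩, rfl⟩
    rw [mem_dihedral] at hσ
    obtain ⟨k, rfl | rfl⟩ := hσ
    · exact ⟨(true, k), (key1 k).symm⟩
    · exact ⟨(false, k), (key2 k).symm⟩
  · rintro ⟨⟨b, k⟩, rfl⟩
    cases b
    · exact ⟨permMat n (Equiv.addRight k * rfl' n),
        ⟨_, (mem_dihedral n _).mpr ⟨k, Or.inr rfl⟩, rfl⟩, key2 k⟩
    · exact ⟨permMat n (Equiv.addRight k),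
        ⟨_, (mem_dihedral n _).mpr ⟨k, Or.inl rfl⟩, rfl⟩, key1 k⟩
end

section
/- The affine hull of Q_n has dimension 2n−2; equivalently, any 2n−1 of the 2n defining vertices of Q_n are affinely independent, and the full set of 2n vertices is affinely dependent. -/
open Matrix Finset

variable (n : ℕ) [NeZero n]

lemma Rpow_apply (m : ℕ) (k j : ZMod n) :
    (Rmat n ^ m) k j = if j = k + (m : ZMod n) then 1 else 0 := by
  induction m generalizing j with
  | zero => simp [Matrix.one_apply, eq_comm]
  | succ m ih =>
    rw [pow_succ, Matrix.mul_apply]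
    have : ∀ l : ZMod n, (Rmat n ^ m) k l * Rmat n l j
        = if l = k + (m : ZMod n) then (if j = l + 1 then (1:ℝ) else 0) else 0 := by
      intro l
      rw [ih, Rmat]
      by_cases h : l = k + (m : ZMod n) <;> simp [h]
    rw [Finset.sum_congr rfl fun l _ => this l, Finset.sum_ite_eq' univ]
    push_cast
    simp [add_assoc]

lemma comb_apply (f : Bool × ZMod n → ℝ) (b j : ZMod n) :
    (∑ i : Bool × ZMod n, f i • Wrow n i) b j = f (false, j) + f (true, j - b) := by
  rw [Matrix.sum_apply, Fintype.sum_prod_type, Fintype.sum_bool]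
  have h1 : ∀ k : ZMod n, (f (false, k) • Wrow n (false, k)) b j
      = if k = j then f (false, k) else 0 := by
    intro k
    by_cases h : k = j
    · subst h; simp [Wrow]
    · simp [Wrow, Ne.symm h, h]
  have h2 : ∀ k : ZMod n, (f (true, k) • Wrow n (true, k)) b j
      = if k = j - b then f (true, k) else 0 := by
    intro k
    have hiff : (j = k + b) ↔ (k = j - b) := by
      rw [eq_sub_iff_add_eq, eq_comm]
    simp only [Wrow, Matrix.smul_apply, Matrix.of_apply, smul_eq_mul,
      Rpow_apply, ZMod.natCast_rightInverse b, hiff]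
    by_cases h : k = j - b <;> simp [h]
  rw [Finset.sum_congr rfl fun k _ => h1 k, Finset.sum_congr rfl fun k _ => h2 k,
    Finset.sum_ite_eq' univ, Finset.sum_ite_eq' univ]
  simp [add_comm]

lemma key (f : Bool × ZMod n → ℝ) (h : ∑ i : Bool × ZMod n, f i • Wrow n i = 0) :
    ∀ i : Bool × ZMod n, f i = if i.1 then -(f (false, 0)) else f (false, 0) := by
  have e : ∀ b j : ZMod n, f (false, j) + f (true, j - b) = 0 := by
    intro b j
    have := congr_fun (congr_fun h b) j
    rwa [comb_apply] at this
  have ht : ∀ m : ZMod n, f (true, m) = -(f (false, 0)) := by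
    intro m
    have := e (-m) 0
    rw [zero_sub, neg_neg] at this
    linarith
  have hf : ∀ j : ZMod n, f (false, j) = f (false, 0) := by
    intro j
    have h1 := e j j
    rw [sub_self, ht 0] at h1
    linarith
  rintro ⟨b, k⟩
  cases b
  · simpa using hf k
  · simpa using ht k


/-- the affine hull of `Q_n` has dimension `2n-2`; any `2n-1` of the `2n`
defining vertices are affinely independent, and all `2n` together are affinely dependent. -/
theorem Q_dim_and_affineIndependence (n : ℕ) [NeZero n] (hn : 3 ≤ n) :
    Module.finrank ℝ (vectorSpan ℝ (Set.range (Wrow n))) = 2 * n - 2 ∧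
    (∀ i₀ : Bool × ZMod n,
      AffineIndependent ℝ (fun i : {i : Bool × ZMod n // i ≠ i₀} => Wrow n i)) ∧
    ¬ AffineIndependent ℝ (Wrow n) := by
  -- the explicit affine dependence
  set g : Bool × ZMod n → ℝ := fun i => if i.1 then -1 else 1 with hg
  have hgsum : ∑ i : Bool × ZMod n, g i = 0 := by
    rw [Fintype.sum_prod_type, Fintype.sum_bool]
    simp [g]
  have hgcomb : ∑ i : Bool × ZMod n, g i • Wrow n i = 0 := by
    ext b j
    rw [comb_apply]
    simp [g]
  have hdep : ¬ AffineIndependent ℝ (Wrow n) := by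
    rw [affineIndependent_iff_of_fintype]
    intro H
    have := H g hgsum
      (by rw [Finset.weightedVSub_eq_linear_combination _ hgsum]; exact hgcomb) (false, 0)
    simp [g] at this
  have hind : ∀ i₀ : Bool × ZMod n,
      AffineIndependent ℝ (fun i : {i : Bool × ZMod n // i ≠ i₀} => Wrow n i) := by
    intro i₀
    rw [affineIndependent_iff_of_fintype]
    intro w hw hvs
    rw [Finset.weightedVSub_eq_linear_combination _ hw] at hvs
    set f : Bool × ZMod n → ℝ := fun i => if h : i = i₀ then 0 else w ⟨i, h⟩ with hfdef
    have hfi0 : f i₀ = 0 := dif_pos rfl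
    have hfsub : ∀ i : {i : Bool × ZMod n // i ≠ i₀}, f ↑i = w i := by
      intro i
      simp only [hfdef, dif_neg i.2]
    have hfsum : ∑ i : Bool × ZMod n, f i • Wrow n i = 0 := by
      rw [Finset.sum_eq_sum_sdiff_singleton_add (mem_univ i₀), hfi0, zero_smul, add_zero,
        Finset.sum_subtype (p := fun i => i ≠ i₀) (univ \ {i₀}) (by simp) (fun i => f i • Wrow n i)]
      rw [← hvs]
      exact Finset.sum_congr rfl fun i _ => by rw [hfsub]
    have hkey := key n f hfsum
    have ht : f (false, 0) = 0 := by
      have h0 := hkey i₀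
      rw [hfi0] at h0
      rcases i₀ with ⟨b, k⟩
      cases b <;> simp at h0 <;> linarith
    intro i
    rw [← hfsub i]
    have h1 := hkey ↑i
    rw [ht] at h1
    rcases hi : (i : Bool × ZMod n) with ⟨b, k⟩
    rw [hi] at h1
    cases b <;> simpa using h1
  have hcard : Fintype.card (Bool × ZMod n) = 2 * n := by
    simp [ZMod.card, two_mul]
  have hcard' : ∀ i₀ : Bool × ZMod n, Fintype.card {i : Bool × ZMod n // i ≠ i₀} = 2 * n - 1 := by
    intro i₀
    have h := Fintype.card_subtype_compl (fun i : Bool × ZMod n => i = i₀)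
    simp only [Fintype.card_subtype_eq, hcard] at h
    exact h
  refine ⟨?_, hind, hdep⟩
  have hlow : 2 * n - 2 ≤ Module.finrank ℝ (vectorSpan ℝ (Set.range (Wrow n))) := by
    have h1 := (hind (false, 0)).finrank_vectorSpan
      (n := 2 * n - 2) (by rw [hcard' (false, 0)]; omega)
    have h2 : vectorSpan ℝ (Set.range (fun i : {i : Bool × ZMod n // i ≠ (false, 0)} => Wrow n i))
        ≤ vectorSpan ℝ (Set.range (Wrow n)) := by
      apply vectorSpan_mono
      rintro _ ⟨i, rfl⟩
      exact ⟨↑i, rfl⟩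
    calc 2 * n - 2 = Module.finrank ℝ
          (vectorSpan ℝ (Set.range (fun i : {i : Bool × ZMod n // i ≠ (false, 0)} => Wrow n i))) := h1.symm
      _ ≤ _ := Submodule.finrank_mono h2
  have hup : Module.finrank ℝ (vectorSpan ℝ (Set.range (Wrow n))) ≤ 2 * n - 1 :=
    finrank_vectorSpan_range_le ℝ (Wrow n) (by rw [hcard]; omega)
  have hne : Module.finrank ℝ (vectorSpan ℝ (Set.range (Wrow n))) ≠ 2 * n - 1 := by
    intro h
    exact hdep ((affineIndependent_iff_finrank_vectorSpan_eq ℝ (Wrow n)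
      (by rw [hcard]; omega)).2 h)
  omega
end

section
/- The polytope Q_n is a free sum of two (n−1)-simplices: the first n vertices and the last n vertices of Q_n each form an (n−1)-dimensional simplex, these two simplices lie in affine subspaces whose intersection is the single point (1/n,...,1/n) ∈ ℝ^{n²}, and Q_n is the convex hull of their union. -/
open Matrix Finset

variable (n : ℕ) [NeZero n]

section helpers

lemma Rmat_apply (i j : ZMod n) : Rmat n i j = if j = i + 1 then 1 else 0 := rfl

lemma WrowF_apply (k b j : ZMod n) :
    Wrow n (false, k) b j = if j = k then (1:ℝ) else 0 := rfl

lemma WrowT_apply (k b j : ZMod n) :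
    Wrow n (true, k) b j = if j = k + b then (1:ℝ) else 0 := by
  show (Rmat n ^ b.val) k j = _
  rw [Rpow_apply]
  simp [ZMod.natCast_val, ZMod.cast_id]

end helpers

/-- `Q_n` is a free sum of two `(n-1)`-simplices: the first `n` and the last
`n` vertices each form an `(n-1)`-simplex, the affine hulls of these simplices meet
exactly in the point `(1/n,...,1/n)`, and `Q_n` is the convex hull of their union. -/
theorem Q_freeSum_of_simplices (n : ℕ) [NeZero n] (hn : 3 ≤ n) :
    AffineIndependent ℝ (fun k : ZMod n => Wrow n (false, k)) ∧
    AffineIndependent ℝ (fun k : ZMod n => Wrow n (true, k)) ∧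
    ((affineSpan ℝ (Set.range fun k : ZMod n => Wrow n (false, k)) : Set (Matrix (ZMod n) (ZMod n) ℝ)) ∩
     (affineSpan ℝ (Set.range fun k : ZMod n => Wrow n (true, k)) : Set (Matrix (ZMod n) (ZMod n) ℝ)))
      = {(Matrix.of fun _ _ => (n : ℝ)⁻¹ : Matrix (ZMod n) (ZMod n) ℝ)} ∧
    Qpoly n = convexHull ℝ
      (convexHull ℝ (Set.range fun k : ZMod n => Wrow n (false, k)) ∪
       convexHull ℝ (Set.range fun k : ZMod n => Wrow n (true, k))) := by
  have hn0 : (n : ℝ) ≠ 0 := Nat.cast_ne_zero.2 (NeZero.ne n)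
  have hcard : (Finset.univ : Finset (ZMod n)).card = n := by
    simp [Finset.card_univ, ZMod.card]
  refine ⟨?_, ?_, ?_, ?_⟩
  · rw [affineIndependent_iff]
    intro s w _ hsum i hi
    have h := congrFun (congrFun hsum 0) i
    simp only [Matrix.sum_apply, Matrix.smul_apply, smul_eq_mul, WrowF_apply,
      mul_ite, mul_one, mul_zero, Matrix.zero_apply, Finset.sum_ite_eq] at h
    rwa [if_pos hi] at h
  · rw [affineIndependent_iff]
    intro s w _ hsum i hi
    have h := congrFun (congrFun hsum 0) i
    simp only [Matrix.sum_apply, Matrix.smul_apply, smul_eq_mul, WrowT_apply,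
      add_zero, mul_ite, mul_one, mul_zero, Matrix.zero_apply, Finset.sum_ite_eq] at h
    rwa [if_pos hi] at h
  · ext x
    simp only [Set.mem_inter_iff, Set.mem_singleton_iff, SetLike.mem_coe]
    constructor
    · rintro ⟨hxF, hxT⟩
      obtain ⟨s, w, hw, hxw⟩ := eq_affineCombination_of_mem_affineSpan hxF
      obtain ⟨t, v, hv, hxv⟩ := eq_affineCombination_of_mem_affineSpan hxT
      rw [Finset.affineCombination_eq_linear_combination _ _ _ hw] at hxw
      rw [Finset.affineCombination_eq_linear_combination _ _ _ hv] at hxv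
      have hfa : ∀ b j : ZMod n, x b j = if j ∈ s then w j else 0 := by
        intro b j
        rw [hxw]
        simp only [Matrix.sum_apply, Matrix.smul_apply, smul_eq_mul, WrowF_apply,
          mul_ite, mul_one, mul_zero, Finset.sum_ite_eq]
      have hfb : ∀ b j : ZMod n, x b j = if j - b ∈ t then v (j - b) else 0 := by
        intro b j
        rw [hxv]
        have hcond : ∀ k : ZMod n, (j = k + b) ↔ (k = j - b) := fun k => by
          rw [eq_sub_iff_add_eq, eq_comm]
        simp only [Matrix.sum_apply, Matrix.smul_apply, smul_eq_mul, WrowT_apply,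
          mul_ite, mul_one, mul_zero, hcond, Finset.sum_ite_eq' t (j - b) v]
      have hconst : ∀ b j : ZMod n, x b j = x 0 0 := by
        intro b j
        have h1 : x b j = x j j := by rw [hfa b j, hfa j j]
        have h2 : x j j = x 0 0 := by rw [hfb j j, hfb 0 0]; simp
        rw [h1, h2]
      have hsum : ∑ j : ZMod n, x 0 j = 1 := by
        have : ∀ j : ZMod n, x 0 j = if j ∈ s then w j else 0 := fun j => hfa 0 j
        simp only [this]
        rw [Finset.sum_ite_mem, Finset.univ_inter, hw]
      have hval : x 0 0 = (n : ℝ)⁻¹ := by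
        have : (n : ℝ) * x 0 0 = 1 := by
          rw [← hsum]
          simp only [fun j => hconst 0 j]
          rw [Finset.sum_const, hcard, nsmul_eq_mul]
        field_simp at this ⊢
        linarith
      funext b j
      rw [Matrix.of_apply, hconst b j, hval]
    · rintro rfl
      have hwsum : ∑ _k : ZMod n, (n : ℝ)⁻¹ = 1 := by
        rw [Finset.sum_const, hcard, nsmul_eq_mul, mul_inv_cancel₀ hn0]
      constructor
      · have hmem := affineCombination_mem_affineSpan (k := ℝ)
          (w := fun _ : ZMod n => (n : ℝ)⁻¹) hwsum (fun k : ZMod n => Wrow n (false, k))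
        convert hmem using 1
        rw [Finset.affineCombination_eq_linear_combination _ _ _ hwsum]
        funext b j
        simp only [Matrix.sum_apply, Matrix.smul_apply, smul_eq_mul, WrowF_apply,
          mul_ite, mul_one, mul_zero, Finset.sum_ite_eq, Finset.mem_univ, if_true,
          Matrix.of_apply]
      · have hmem := affineCombination_mem_affineSpan (k := ℝ)
          (w := fun _ : ZMod n => (n : ℝ)⁻¹) hwsum (fun k : ZMod n => Wrow n (true, k))
        convert hmem using 1
        rw [Finset.affineCombination_eq_linear_combination _ _ _ hwsum]
        funext b j
        have hcond : ∀ k : ZMod n, (j = k + b) ↔ (k = j - b) := fun k => by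
          rw [eq_sub_iff_add_eq, eq_comm]
        simp only [Matrix.sum_apply, Matrix.smul_apply, smul_eq_mul, WrowT_apply,
          mul_ite, mul_one, mul_zero, hcond, Finset.sum_ite_eq', Finset.mem_univ,
          if_true, Matrix.of_apply]
  · have hrange : Set.range (Wrow n) =
        (Set.range fun k : ZMod n => Wrow n (false, k)) ∪
        (Set.range fun k : ZMod n => Wrow n (true, k)) := by
      ext x
      constructor
      · rintro ⟨⟨b, k⟩, rfl⟩
        cases b
        · exact Or.inl ⟨k, rfl⟩
        · exact Or.inr ⟨k, rfl⟩
      · rintro (⟨k, rfl⟩ | ⟨k, rfl⟩)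
        exacts [⟨(false, k), rfl⟩, ⟨(true, k), rfl⟩]
    rw [Qpoly, hrange, convexHull_convexHull_union_left, convexHull_convexHull_union_right]
end

section
/- Within its affine hull, Q_n is defined by the n² inequalities x_i ≥ 0 (0 ≤ i ≤ n²−1), i.e. Q_n equals the intersection of its affine hull with the nonnegative orthant; moreover each inequality x_i ≥ 0 defines a facet, so Q_n has exactly n² facets. -/
open Matrix Finset

variable (n : ℕ) [NeZero n]

/-! Entry `(b, j)` of `∑ᵢ wᵢ • Wᵢ` is `w (false, j) + w (true, j - b)`. Hence the only linear
relation among the `2n` rows is "sum of the first block = sum of the second block", so any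
`2n - 1` rows are affinely independent, and a point of the affine hull with nonnegative entries
is a convex combination of the rows once weight is shifted from one block to the other.
A convex extreme subset of a convex hull is the hull of the generators it contains. The face
`x b j = 0` contains every row except `(false, j)` and `(true, j - b)`, so it has dimension
`2n - 3`. Conversely, a face of dimension `2n - 3` misses exactly two rows; they lie in different
blocks because both blocks have the same barycentre, and then they determine `(b, j)`. -/

theorem affineIndependent_restrict_of_forall {k V ι : Type*} [Ring k] [AddCommGroup V]
    [Module k V] [Fintype ι] {v : ι → V} {s : Set ι}
    (h : ∀ w : ι → k, (∀ i ∉ s, w i = 0) → ∑ i, w i = 0 → ∑ i, w i • v i = 0 → ∀ i, w i = 0) :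
    AffineIndependent k fun i : s => v i := by
  classical
  rw [affineIndependent_iff]
  intro t w hw hwv e he
  set W : ι → k := Function.extend Subtype.val (fun e => if e ∈ t then w e else 0) 0
  have hW : ∀ e : s, W e = if e ∈ t then w e else 0 := fun e =>
    Subtype.val_injective.extend_apply _ _ e
  have hWout : ∀ i ∉ s, W i = 0 := fun i hi =>
    Function.extend_apply' _ _ _ fun ⟨e, he⟩ => hi (he ▸ e.2)
  have hW0 := h W hWout
    (by
      rw [sum_congr_set s W (fun e : s => W e) (fun _ _ => rfl) hWout]
      simpa [hW, sum_ite_mem] using hw)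
    (by
      rw [sum_congr_set s _ (fun e : s => W e • v e) (fun _ _ => rfl)
        fun i hi => by rw [hWout i hi, zero_smul]]
      simpa [hW, ite_smul, sum_ite_mem] using hwv) e
  simpa [hW, he] using hW0

section Convex

variable {𝕜 E ι : Type*} [Field 𝕜] [LinearOrder 𝕜] [AddCommGroup E] [Module 𝕜 E]

theorem finrank_vectorSpan_convexHull_image {v : ι → E} {s : Finset ι}
    (hv : AffineIndependent 𝕜 fun i : s => v i) {m : ℕ} (hs : #s = m + 1) :
    Module.finrank 𝕜 (vectorSpan 𝕜 (convexHull 𝕜 (v '' s))) = m := by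
  rw [← direction_affineSpan, affineSpan_convexHull, direction_affineSpan, Set.image_eq_range]
  exact hv.finrank_vectorSpan (by simpa using hs)

variable [IsStrictOrderedRing 𝕜]

theorem isExtreme_sep_eq_zero {A : Set E} (f : E →ₗ[𝕜] 𝕜) (hf : ∀ x ∈ A, 0 ≤ f x) :
    IsExtreme 𝕜 A {x ∈ A | f x = 0} := by
  refine ⟨Set.sep_subset _ _, fun x hx y hy z ⟨_, hz⟩ ⟨a, b, ha, hb, _, hxyz⟩ => ⟨hx, ?_⟩⟩
  rw [← hxyz, map_add, map_smul, map_smul, smul_eq_mul, smul_eq_mul] at hz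
  have hax := ((add_eq_zero_iff_of_nonneg (mul_nonneg ha.le (hf x hx))
    (mul_nonneg hb.le (hf y hy))).1 hz).1
  exact (mul_eq_zero.1 hax).resolve_left ha.ne'

theorem IsExtreme.mem_of_centerMass_mem {A F : Set E} (hAF : IsExtreme 𝕜 A F) (hA : Convex 𝕜 A)
    {t : Finset ι} {w : ι → 𝕜} {z : ι → E} (hw : ∀ j ∈ t, 0 ≤ w j) (hz : ∀ j ∈ t, z j ∈ A)
    (hF : t.centerMass w z ∈ F) {i : ι} (hi : i ∈ t) (hwi : 0 < w i) : z i ∈ F := by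
  classical
  have hw' : ∀ j ∈ t.erase i, 0 ≤ w j := fun j hj => hw j (mem_of_mem_erase hj)
  rcases (sum_nonneg hw').eq_or_lt with hzero | hpos
  · have hsingle : t.centerMass w z = z i := by
      rw [← centerMass_subset z (singleton_subset_iff.2 hi), centerMass_singleton _ _ hwi.ne']
      intro j hj hji
      exact (sum_eq_zero_iff_of_nonneg hw').1 hzero.symm j (mem_erase.2 ⟨by simpa using hji, hj⟩)
    rwa [hsingle] at hF
  · rw [← insert_erase hi, centerMass_insert i (t.erase i) z (notMem_erase i t) hpos.ne'] at hF
    refine hAF.left_mem_of_mem_openSegment (hz i hi)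
      (hA.centerMass_mem hw' hpos fun j hj => hz j (mem_of_mem_erase hj)) hF
      ⟨_, _, by positivity, by positivity, ?_, rfl⟩
    field_simp

theorem IsExtreme.eq_convexHull_inter {s F : Set E} (hF : IsExtreme 𝕜 (convexHull 𝕜 s) F)
    (hFc : Convex 𝕜 F) : F = convexHull 𝕜 (s ∩ F) := by
  classical
  refine (convexHull_min Set.inter_subset_right hFc).antisymm' fun x hx => ?_
  obtain ⟨ι, _, w, z, hw0, hw1, hz, rfl⟩ := mem_convexHull_iff_exists_fintype.1 (hF.subset hx)
  rw [← centerMass_eq_of_sum_1 _ _ hw1] at hx ⊢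
  have hzF : ∀ i, w i ≠ 0 → z i ∈ F := fun i hi =>
    hF.mem_of_centerMass_mem (convex_convexHull 𝕜 s) (fun j _ => hw0 j)
      (fun j _ => subset_convexHull 𝕜 s (hz j)) hx (mem_univ i) ((hw0 i).lt_of_ne' hi)
  rw [← centerMass_filter_ne_zero]
  exact centerMass_mem_convexHull _ (fun i _ => hw0 i)
    (by rw [sum_filter_ne_zero, hw1]; exact one_pos) fun i hi => ⟨hz i, hzF i (mem_filter.1 hi).2⟩

end Convex

theorem Rmat_pow_apply (m : ℕ) (k j : ZMod n) :
    (Rmat n ^ m) k j = if j = k + m then 1 else 0 := by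
  induction m generalizing j with
  | zero => simp [one_apply, eq_comm]
  | succ m ih =>
    rw [pow_succ, mul_apply]
    simp only [ih, ite_mul, one_mul, zero_mul, sum_ite_eq', mem_univ, if_true]
    simp [Rmat, add_assoc]

theorem Wrow_false_apply (k b j : ZMod n) : Wrow n (false, k) b j = if k = j then 1 else 0 := by
  simp [Wrow, eq_comm]

theorem Wrow_true_apply (k b j : ZMod n) : Wrow n (true, k) b j = if k = j - b then 1 else 0 := by
  simp only [Wrow, of_apply, Rmat_pow_apply, ZMod.natCast_zmod_val, eq_sub_iff_add_eq, eq_comm]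

theorem sum_smul_Wrow_apply (w : Bool × ZMod n → ℝ) (b j : ZMod n) :
    (∑ i, w i • Wrow n i) b j = w (false, j) + w (true, j - b) := by
  simp [Matrix.sum_apply, Fintype.sum_prod_type, Wrow_false_apply, Wrow_true_apply, add_comm]

theorem sum_Wrow_block (t : Bool) : ∑ k, Wrow n (t, k) = of fun _ _ => 1 := by
  ext b j
  cases t <;> simp [Matrix.sum_apply, Wrow_false_apply, Wrow_true_apply]

theorem Wrow_apply_nonneg (i : Bool × ZMod n) (b j : ZMod n) : 0 ≤ Wrow n i b j := by
  rcases i with ⟨_ | _, k⟩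
  · rw [Wrow_false_apply]; split_ifs <;> norm_num
  · rw [Wrow_true_apply]; split_ifs <;> norm_num

theorem Wrow_mem_Qpoly (i : Bool × ZMod n) : Wrow n i ∈ Qpoly n :=
  subset_convexHull ℝ _ (Set.mem_range_self i)

theorem Qpoly_apply_nonneg {x : Matrix (ZMod n) (ZMod n) ℝ} (hx : x ∈ Qpoly n) (b j : ZMod n) :
    0 ≤ x b j :=
  convexHull_min (t := {y : Matrix (ZMod n) (ZMod n) ℝ | 0 ≤ y b j})
    (Set.range_subset_iff.2 fun i => Wrow_apply_nonneg n i b j)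
    (convex_halfSpace_ge (entryLinearMap ℝ ℝ b j).isLinear 0) hx

theorem mem_Qpoly_of_mem_affineSpan {x : Matrix (ZMod n) (ZMod n) ℝ}
    (hx : x ∈ affineSpan ℝ (Set.range (Wrow n))) (hx₀ : ∀ b j, 0 ≤ x b j) : x ∈ Qpoly n := by
  obtain ⟨w, hw, rfl⟩ := eq_affineCombination_of_mem_affineSpan_of_fintype hx
  rw [affineCombination_eq_linear_combination _ _ _ hw] at hx₀ ⊢
  obtain ⟨k₀, -, hk₀⟩ := exists_min_image univ (fun k => w (false, k)) univ_nonempty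
  set c := w (false, k₀)
  refine mem_convexHull_of_exists_fintype (fun i => if i.1 then w i + c else w i - c) (Wrow n)
    ?_ ?_ Set.mem_range_self ?_
  · rintro ⟨_ | _, k⟩
    · simpa using hk₀ k (mem_univ k)
    · -- `w (true, k) + w (false, k₀)` is the entry `(k₀ - k, k₀)` of the point.
      have := hx₀ (k₀ - k) k₀
      rw [sum_smul_Wrow_apply, sub_sub_cancel] at this
      simp only [if_true]
      linarith
  · rw [Fintype.sum_prod_type, Fintype.sum_bool] at hw ⊢
    simp only [Bool.false_eq_true, if_false, if_true, sum_add_distrib, sum_sub_distrib]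
    linarith
  · ext b j
    simp only [sum_smul_Wrow_apply, Bool.false_eq_true, if_false, if_true]
    ring

theorem Qpoly_eq_affineSpan_inter_nonneg :
    Qpoly n = {x | x ∈ affineSpan ℝ (Set.range (Wrow n)) ∧ ∀ b j, 0 ≤ x b j} :=
  Set.Subset.antisymm (fun _ hx => ⟨convexHull_subset_affineSpan _ hx, Qpoly_apply_nonneg n hx⟩)
    fun _ hx => mem_Qpoly_of_mem_affineSpan n hx.1 hx.2

theorem eq_zero_of_sum_smul_Wrow_eq_zero {w : Bool × ZMod n → ℝ} (hw : ∑ i, w i • Wrow n i = 0)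
    {i₀ : Bool × ZMod n} (hi₀ : w i₀ = 0) (i : Bool × ZMod n) : w i = 0 := by
  have hpair : ∀ j k, w (false, j) + w (true, k) = 0 := fun j k => by
    simpa [sum_smul_Wrow_apply] using congr_fun₂ hw (j - k) j
  rcases i₀ with ⟨_ | _, k₀⟩ <;> rcases i with ⟨_ | _, k⟩
  · linarith [hpair k₀ 0, hpair k 0]
  · linarith [hpair k₀ k]
  · linarith [hpair k k₀]
  · linarith [hpair 0 k₀, hpair 0 k]

theorem affineIndependent_Wrow {s : Set (Bool × ZMod n)} {i₀ : Bool × ZMod n} (hi₀ : i₀ ∉ s) :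
    AffineIndependent ℝ fun i : s => Wrow n i :=
  affineIndependent_restrict_of_forall fun _ hs _ hw =>
    eq_zero_of_sum_smul_Wrow_eq_zero n hw (hs i₀ hi₀)

def coordFace (b j : ZMod n) : Set (Matrix (ZMod n) (ZMod n) ℝ) := {x ∈ Qpoly n | x b j = 0}

theorem isExtreme_coordFace (b j : ZMod n) : IsExtreme ℝ (Qpoly n) (coordFace n b j) :=
  isExtreme_sep_eq_zero (entryLinearMap ℝ ℝ b j) fun _ hx => Qpoly_apply_nonneg n hx b j

theorem convex_coordFace (b j : ZMod n) : Convex ℝ (coordFace n b j) :=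
  (convex_convexHull ℝ _).inter (convex_hyperplane (entryLinearMap ℝ ℝ b j).isLinear 0)

theorem Wrow_mem_coordFace_iff (b j : ZMod n) (i : Bool × ZMod n) :
    Wrow n i ∈ coordFace n b j ↔ i ≠ (false, j) ∧ i ≠ (true, j - b) := by
  rcases i with ⟨_ | _, k⟩ <;>
    simp [coordFace, Wrow_mem_Qpoly, Wrow_false_apply, Wrow_true_apply]

theorem eq_convexHull_Wrow_mem {F : Set (Matrix (ZMod n) (ZMod n) ℝ)}
    (hF : IsExtreme ℝ (Qpoly n) F) (hFc : Convex ℝ F) :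
    F = convexHull ℝ (Wrow n '' {i | Wrow n i ∈ F}) := by
  change F = convexHull ℝ (Wrow n '' (Wrow n ⁻¹' F))
  rw [Set.image_preimage_eq_range_inter]
  exact hF.eq_convexHull_inter hFc

theorem eq_coordFace_of_Wrow_mem_iff {F : Set (Matrix (ZMod n) (ZMod n) ℝ)}
    (hF : IsExtreme ℝ (Qpoly n) F) (hFc : Convex ℝ F) {b j : ZMod n}
    (h : ∀ i, Wrow n i ∈ F ↔ i ≠ (false, j) ∧ i ≠ (true, j - b)) : F = coordFace n b j := by
  rw [eq_convexHull_Wrow_mem n hF hFc,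
    eq_convexHull_Wrow_mem n (isExtreme_coordFace n b j) (convex_coordFace n b j)]
  simp only [h, Wrow_mem_coordFace_iff]

theorem finrank_vectorSpan_coordFace (hn : 2 ≤ n) (b j : ZMod n) :
    Module.finrank ℝ (vectorSpan ℝ (coordFace n b j)) = 2 * n - 3 := by
  have hrows :
      {i | Wrow n i ∈ coordFace n b j} = ↑({(false, j), (true, j - b)}ᶜ : Finset _) := by
    ext i; simp [Wrow_mem_coordFace_iff, and_comm]
  rw [eq_convexHull_Wrow_mem n (isExtreme_coordFace n b j) (convex_coordFace n b j), hrows]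
  refine finrank_vectorSpan_convexHull_image (affineIndependent_Wrow n (i₀ := (false, j)) ?_) ?_
  · simp
  · rw [card_compl, card_pair (by simp)]
    simp only [Fintype.card_prod, Fintype.card_bool, ZMod.card]
    omega

theorem coordFace_injective :
    Function.Injective fun p : ZMod n × ZMod n => coordFace n p.1 p.2 := by
  rintro ⟨b, j⟩ ⟨b', j'⟩ h
  have hrows : ∀ i, Wrow n i ∈ coordFace n b j ↔ Wrow n i ∈ coordFace n b' j' := fun i => by
    simp only at h; rw [h]
  have hj : j = j' := by simpa [Wrow_mem_coordFace_iff] using hrows (false, j)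
  subst hj
  have hb : j - b = j - b' := by simpa [Wrow_mem_coordFace_iff] using hrows (true, j - b)
  simp [sub_right_injective hb]

theorem Wrow_mem_of_forall_Wrow_mem {F : Set (Matrix (ZMod n) (ZMod n) ℝ)}
    (hF : IsExtreme ℝ (Qpoly n) F) (hFc : Convex ℝ F) (t : Bool)
    (h : ∀ k, Wrow n (!t, k) ∈ F) (k : ZMod n) : Wrow n (t, k) ∈ F := by
  have hbary : univ.centerMass (fun _ => (1 : ℝ)) (fun k => Wrow n (t, k))
      = univ.centerMass (fun _ => (1 : ℝ)) (fun k => Wrow n (!t, k)) := by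
    simp only [centerMass, one_smul, sum_Wrow_block]
  refine hF.mem_of_centerMass_mem (convex_convexHull ℝ _) (fun _ _ => zero_le_one)
    (fun k _ => Wrow_mem_Qpoly n _) ?_ (mem_univ k) one_pos
  rw [hbary]
  exact hFc.centerMass_mem (fun _ _ => zero_le_one) (by simpa using NeZero.pos n) fun k _ => h k

theorem card_compl_eq_two_of_finrank (hn : 2 ≤ n) {s : Finset (Bool × ZMod n)}
    (hs : Module.finrank ℝ (vectorSpan ℝ (convexHull ℝ (Wrow n '' s))) = 2 * n - 3) :
    #sᶜ = 2 := by
  have hcard : Fintype.card (Bool × ZMod n) = 2 * n := by simp [two_mul]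
  obtain ⟨i₀, hi₀⟩ : ∃ i₀, i₀ ∉ s := by
    by_contra! hsu
    set i₀ : Bool × ZMod n := (false, 0)
    have hle := (Submodule.finrank_mono (vectorSpan_mono ℝ (convexHull_mono
      (Set.image_mono (s := ↑(univ.erase i₀)) fun i _ => hsu i)))).trans hs.le
    rw [finrank_vectorSpan_convexHull_image (affineIndependent_Wrow n (notMem_erase i₀ univ))
      (m := 2 * n - 2) (by rw [card_erase_of_mem (mem_univ _), card_univ, hcard]; omega)]
      at hle
    omega
  obtain ⟨m, hm⟩ : ∃ m, #s = m + 1 := by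
    refine Nat.exists_eq_add_one.2 (card_pos.2 (nonempty_iff_ne_empty.2 fun hempty => ?_))
    rw [hempty, coe_empty, Set.image_empty, convexHull_empty, vectorSpan_empty, finrank_bot] at hs
    omega
  rw [finrank_vectorSpan_convexHull_image (affineIndependent_Wrow n hi₀) hm] at hs
  rw [card_compl, hcard]
  omega

theorem exists_eq_coordFace (hn : 2 ≤ n) {F : Set (Matrix (ZMod n) (ZMod n) ℝ)}
    (hF : IsExtreme ℝ (Qpoly n) F) (hFc : Convex ℝ F)
    (hdim : Module.finrank ℝ (vectorSpan ℝ F) = 2 * n - 3) : ∃ b j, F = coordFace n b j := by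
  classical
  set s := {i | Wrow n i ∈ F}.toFinset
  have hmem : ∀ i, Wrow n i ∈ F ↔ i ∉ sᶜ := by simp [s]
  have hFs : F = convexHull ℝ (Wrow n '' s) := by
    rw [Set.coe_toFinset]; exact eq_convexHull_Wrow_mem n hF hFc
  obtain ⟨⟨t₁, k₁⟩, ⟨t₂, k₂⟩, -, hpair⟩ :=
    card_eq_two.1 (card_compl_eq_two_of_finrank n hn (hFs ▸ hdim))
  rw [hpair] at hmem
  have ht : t₁ ≠ t₂ := by
    rintro rfl
    have := Wrow_mem_of_forall_Wrow_mem n hF hFc t₁ (fun k => by simp [hmem]) k₁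
    simp [hmem] at this
  obtain ⟨p, q, hpq⟩ : ∃ p q, ∀ i, Wrow n i ∈ F ↔ i ≠ (false, p) ∧ i ≠ (true, q) := by
    cases t₁ <;> cases t₂ <;> simp only [ne_eq, not_true_eq_false] at ht
    · exact ⟨k₁, k₂, fun i => by simp [hmem, not_or]⟩
    · exact ⟨k₂, k₁, fun i => by simp [hmem, not_or, and_comm]⟩
  exact ⟨p - q, p,
    eq_coordFace_of_Wrow_mem_iff n hF hFc (by simpa only [sub_sub_cancel] using hpq)⟩

/-- inside its affine hull, `Q_n` is cut out by the `n²` inequalities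
`x_i ≥ 0`; each such inequality defines a facet, and `Q_n` has exactly `n²` facets. -/
theorem Q_facet_description (n : ℕ) [NeZero n] (hn : 3 ≤ n) :
    Qpoly n = {x | x ∈ affineSpan ℝ (Set.range (Wrow n)) ∧ ∀ b j, 0 ≤ x b j} ∧
    (∀ b j : ZMod n, IsExtreme ℝ (Qpoly n) {x ∈ Qpoly n | x b j = 0} ∧
      Module.finrank ℝ (vectorSpan ℝ {x ∈ Qpoly n | x b j = 0}) = 2 * n - 3) ∧
    {F : Set (Matrix (ZMod n) (ZMod n) ℝ) | IsExtreme ℝ (Qpoly n) F ∧ Convex ℝ F ∧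
      Module.finrank ℝ (vectorSpan ℝ F) = 2 * n - 3}.ncard = n ^ 2 := by
  have hn2 : 2 ≤ n := by omega
  refine ⟨Qpoly_eq_affineSpan_inter_nonneg n, fun b j =>
    ⟨isExtreme_coordFace n b j, finrank_vectorSpan_coordFace n hn2 b j⟩, ?_⟩
  have hfacets : {F : Set (Matrix (ZMod n) (ZMod n) ℝ) | IsExtreme ℝ (Qpoly n) F ∧ Convex ℝ F ∧
      Module.finrank ℝ (vectorSpan ℝ F) = 2 * n - 3} =
        Set.range fun p : ZMod n × ZMod n => coordFace n p.1 p.2 := by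
    ext F
    constructor
    · rintro ⟨hF, hFc, hdim⟩
      obtain ⟨b, j, rfl⟩ := exists_eq_coordFace n hn2 hF hFc hdim
      exact ⟨(b, j), rfl⟩
    · rintro ⟨⟨b, j⟩, rfl⟩
      exact ⟨isExtreme_coordFace n b j, convex_coordFace n b j,
        finrank_vectorSpan_coordFace n hn2 b j⟩
  rw [hfacets, Set.ncard_range_of_injective (coordFace_injective n), Nat.card_eq_fintype_card,
    Fintype.card_prod, ZMod.card, sq]
end

section
/- For n even, the dimension of DP_n = conv{M_σ : σ ∈ D_n} ⊆ ℝ^{n×n} is 2n − 3. -/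
/-! The vertices of `DP_n` are the matrices of `x ↦ x + k` and `x ↦ k - x` on `ZMod n`, and the
combination `∑ c_x M_x` has `(i, j)` entry `c (false, i - j) + c (true, i + j)`. For even `n` the
pairs `(i - j, i + j)` are exactly the pairs of residues of equal parity, so the linear relations
among the `2n` vertices are `c (false, a) = -c (true, b) = t (a mod 2)`, a 2-dimensional space:
the vertices span a space of dimension `2n - 2`. They all lie in the affine hyperplane "column `0`
sums to `1`", which misses the origin, so their affine hull has dimension `2n - 3`. -/

open Matrix Finset

variable (n : ℕ) [NeZero n]

theorem finrank_span_eq_finrank_vectorSpan_add_one {K V : Type*} [DivisionRing K]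
    [AddCommGroup V] [Module K V] [FiniteDimensional K V] {s : Set V} (hs : s.Nonempty)
    (f : V →ₗ[K] K) (hf : ∀ x ∈ s, f x = 1) :
    Module.finrank K (Submodule.span K s) = Module.finrank K (vectorSpan K s) + 1 := by
  obtain ⟨p, hp⟩ := hs
  have hker : vectorSpan K s ≤ LinearMap.ker f := by
    rw [vectorSpan_def, Submodule.span_le]
    rintro _ ⟨x, hx, y, hy, rfl⟩
    simp [hf x hx, hf y hy]
  have hsup : Submodule.span K s = vectorSpan K s ⊔ K ∙ p := by
    refine le_antisymm (Submodule.span_le.mpr fun x hx => ?_) (sup_le ?_ ?_)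
    · rw [← sub_add_cancel x p]
      exact Submodule.add_mem_sup (vsub_mem_vectorSpan K hx hp)
        (Submodule.mem_span_singleton_self p)
    · rw [vectorSpan_def, Submodule.span_le]
      rintro _ ⟨x, hx, y, hy, rfl⟩
      exact sub_mem (Submodule.subset_span hx) (Submodule.subset_span hy)
    · exact Submodule.span_le.mpr (Set.singleton_subset_iff.mpr (Submodule.subset_span hp))
  have hinf : vectorSpan K s ⊓ K ∙ p = ⊥ := by
    refine (Submodule.eq_bot_iff _).mpr fun v ⟨hv, hvp⟩ => ?_
    obtain ⟨a, rfl⟩ := Submodule.mem_span_singleton.mp hvp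
    have : a = 0 := by simpa [hf p hp] using hker hv
    simp [this]
  have hp0 : p ≠ 0 := fun h => by simpa [h] using hf p hp
  have := Submodule.finrank_sup_add_finrank_inf_eq (vectorSpan K s) (K ∙ p)
  rw [hinf, finrank_bot, finrank_span_singleton hp0, ← hsup] at this
  omega

theorem sum_permMat_col {n : ℕ} [NeZero n] (σ : Equiv.Perm (ZMod n)) (j : ZMod n) :
    ∑ i, permMat n σ i j = 1 := by
  simp [permMat]

def dihedralPerm {n : ℕ} : Bool × ZMod n → Equiv.Perm (ZMod n)
  | (false, k) => Equiv.addRight k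
  | (true, k) => Equiv.subLeft k

@[simp] theorem dihedralPerm_false_apply {n : ℕ} (k x : ZMod n) :
    dihedralPerm (false, k) x = x + k := rfl

@[simp] theorem dihedralPerm_true_apply {n : ℕ} (k x : ZMod n) :
    dihedralPerm (true, k) x = k - x := rfl

def dihedralPermSubgroup (n : ℕ) : Subgroup (Equiv.Perm (ZMod n)) where
  carrier := Set.range dihedralPerm
  one_mem' := ⟨(false, 0), Equiv.ext fun x => add_zero x⟩
  mul_mem' := by
    rintro _ _ ⟨⟨_ | _, k⟩, rfl⟩ ⟨⟨_ | _, l⟩, rfl⟩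
    on_goal 1 => refine ⟨(false, l + k), ?_⟩
    on_goal 2 => refine ⟨(true, l + k), ?_⟩
    on_goal 3 => refine ⟨(true, k - l), ?_⟩
    on_goal 4 => refine ⟨(false, k - l), ?_⟩
    all_goals
      ext x
      simp only [Equiv.Perm.mul_apply, dihedralPerm_false_apply, dihedralPerm_true_apply]
      ring
  inv_mem' := by
    rintro _ ⟨⟨_ | _, k⟩, rfl⟩
    exacts [⟨(false, -k), Equiv.ext fun x => (Equiv.eq_symm_apply _).mpr (by simp)⟩,
      ⟨(true, k), Equiv.ext fun x => (Equiv.eq_symm_apply _).mpr (by simp)⟩]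

theorem rot_pow_apply {n : ℕ} (m : ℕ) (x : ZMod n) : (rot n ^ m) x = x + m := by
  induction m with
  | zero => simp
  | succ m ih =>
    rw [pow_succ', Equiv.Perm.mul_apply, ih]
    push_cast
    exact add_assoc x m 1

theorem dihedral_eq_dihedralPermSubgroup {n : ℕ} [NeZero n] :
    dihedral n = dihedralPermSubgroup n := by
  refine le_antisymm ((Subgroup.closure_le _).mpr ?_) ?_
  · rintro σ (rfl | rfl)
    exacts [⟨(false, 1), rfl⟩, ⟨(true, 0), Equiv.ext fun x => zero_sub x⟩]
  · have hrot : ∀ k : ZMod n, dihedralPerm (false, k) = rot n ^ k.val := fun k =>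
      Equiv.ext fun x => by rw [rot_pow_apply, ZMod.natCast_zmod_val]; rfl
    have hmem : ∀ k : ZMod n, dihedralPerm (false, k) ∈ dihedral n := fun k =>
      hrot k ▸ pow_mem (Subgroup.subset_closure (by simp)) _
    rintro _ ⟨⟨_ | _, k⟩, rfl⟩
    · exact hmem k
    · have : dihedralPerm (true, k) = dihedralPerm (false, k) * rfl' n :=
        Equiv.ext fun x => neg_add_eq_sub x k |>.symm
      exact this ▸ mul_mem (hmem k) (Subgroup.subset_closure (by simp))

theorem dihedral_vertices_eq_range {n : ℕ} [NeZero n] :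
    {M | ∃ σ ∈ dihedral n, M = permMat n σ} = Set.range (permMat n ∘ dihedralPerm) := by
  ext M
  simp only [dihedral_eq_dihedralPermSubgroup]
  constructor
  · rintro ⟨_, ⟨x, rfl⟩, rfl⟩
    exact ⟨x, rfl⟩
  · rintro ⟨x, rfl⟩
    exact ⟨_, ⟨x, rfl⟩, rfl⟩

def parity {n : ℕ} (h : 2 ∣ n) : ZMod n →+* ZMod 2 := ZMod.castHom h (ZMod 2)

theorem parity_natCast_val {n : ℕ} (h : 2 ∣ n) (e : ZMod 2) :
    parity h (e.val : ZMod n) = e := by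
  rw [map_natCast, ZMod.natCast_zmod_val]

theorem exists_add_self_eq_of_parity_eq_zero {n : ℕ} [NeZero n] (h : 2 ∣ n) {e : ZMod n}
    (he : parity h e = 0) : ∃ i, i + i = e := by
  obtain ⟨m, hm⟩ : 2 ∣ e.val := by
    rwa [← ZMod.natCast_eq_zero_iff, ← map_natCast (parity h), ZMod.natCast_zmod_val]
  exact ⟨m, by rw [← ZMod.natCast_zmod_val e, hm]; push_cast; ring⟩

def parityLift {n : ℕ} (h : 2 ∣ n) : (ZMod 2 → ℝ) →ₗ[ℝ] (Bool × ZMod n → ℝ) where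
  toFun t x := if x.1 then -t (parity h x.2) else t (parity h x.2)
  map_add' t t' := by ext ⟨_ | _, a⟩ <;> simp [add_comm]
  map_smul' r t := by ext ⟨_ | _, a⟩ <;> simp

@[simp] theorem parityLift_apply_false {n : ℕ} (h : 2 ∣ n) (t : ZMod 2 → ℝ) (a : ZMod n) :
    parityLift h t (false, a) = t (parity h a) := rfl

@[simp] theorem parityLift_apply_true {n : ℕ} (h : 2 ∣ n) (t : ZMod 2 → ℝ) (a : ZMod n) :
    parityLift h t (true, a) = -t (parity h a) := rfl

theorem parityLift_injective {n : ℕ} (h : 2 ∣ n) : Function.Injective (parityLift h) :=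
  fun t t' htt' => funext fun e => by simpa [parity_natCast_val] using congr_fun htt' (false, e.val)

noncomputable def dihedralComb (n : ℕ) [NeZero n] :
    (Bool × ZMod n → ℝ) →ₗ[ℝ] Matrix (ZMod n) (ZMod n) ℝ :=
  Fintype.linearCombination ℝ (permMat n ∘ dihedralPerm)

section DihedralComb

variable {n : ℕ} [NeZero n]

theorem dihedralComb_apply (c : Bool × ZMod n → ℝ) (i j : ZMod n) :
    dihedralComb n c i j = c (false, i - j) + c (true, i + j) := by
  have hf : ∀ k, (i = j + k) ↔ (k = i - j) := fun k => by
    rw [eq_sub_iff_add_eq, add_comm, eq_comm]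
  have ht : ∀ k, (i = k - j) ↔ (k = i + j) := fun k => eq_sub_iff_add_eq.trans eq_comm
  simp [dihedralComb, Fintype.linearCombination_apply, Matrix.sum_apply, Fintype.sum_prod_type,
    permMat, hf, ht, add_comm]

theorem add_eq_zero_of_dihedralComb_eq_zero (h : 2 ∣ n) {c : Bool × ZMod n → ℝ}
    (hc : dihedralComb n c = 0) {a b : ZMod n} (hab : parity h a = parity h b) :
    c (false, a) + c (true, b) = 0 := by
  -- the entry `(i, i - a)` with `i + i = a + b` sees `c (false, a)` and `c (true, b)`
  obtain ⟨i, hi⟩ := exists_add_self_eq_of_parity_eq_zero h (e := a + b)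
    (by rw [map_add, hab, CharTwo.add_self_eq_zero])
  have := congr_fun₂ hc i (i - a)
  rwa [dihedralComb_apply, sub_sub_cancel, ← add_sub_assoc, hi, add_sub_cancel_left] at this

theorem range_parityLift (h : 2 ∣ n) :
    LinearMap.range (parityLift h) = LinearMap.ker (dihedralComb n) := by
  refine le_antisymm ?_ fun c hc => ?_
  · rintro _ ⟨t, rfl⟩
    ext i j
    rw [dihedralComb_apply, parityLift_apply_false, parityLift_apply_true, map_sub,
      CharTwo.sub_eq_add, ← map_add, add_neg_cancel, Matrix.zero_apply]
  · refine ⟨fun e => c (false, (e.val : ZMod n)), funext ?_⟩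
    rintro ⟨_ | _, a⟩
    all_goals
      have hsec := parity_natCast_val h (parity h a)
      have h₁ := add_eq_zero_of_dihedralComb_eq_zero h hc hsec
      have h₂ := add_eq_zero_of_dihedralComb_eq_zero h hc hsec.symm
      have h₃ := add_eq_zero_of_dihedralComb_eq_zero h hc (rfl : parity h a = parity h a)
      simp only [parityLift_apply_false, parityLift_apply_true]
      linarith

theorem finrank_span_range_dihedral_permMat (h : 2 ∣ n) :
    Module.finrank ℝ (Submodule.span ℝ (Set.range (permMat n ∘ dihedralPerm))) =
      2 * n - 2 := by
  have hker : Module.finrank ℝ (LinearMap.ker (dihedralComb n)) = 2 := by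
    rw [← range_parityLift h, LinearMap.finrank_range_of_inj (parityLift_injective h)]
    simp
  have := LinearMap.finrank_range_add_finrank_ker (dihedralComb n)
  rw [hker, Module.finrank_fintype_fun_eq_card, Fintype.card_prod, Fintype.card_bool,
    ZMod.card, dihedralComb, Fintype.range_linearCombination] at this
  omega

end DihedralComb

theorem DP_dim_even_general (n : ℕ) [NeZero n] (he : Even n) :
    Module.finrank ℝ (vectorSpan ℝ (DP n)) = 2 * n - 3 := by
  rw [DP, ← direction_affineSpan, affineSpan_convexHull, direction_affineSpan,
    dihedral_vertices_eq_range]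
  have hcol : ∀ M ∈ Set.range (permMat n ∘ dihedralPerm),
      (∑ i, Matrix.entryLinearMap ℝ ℝ i (0 : ZMod n)) M = 1 := by
    rintro _ ⟨x, rfl⟩
    simpa using sum_permMat_col (dihedralPerm x) 0
  have := finrank_span_eq_finrank_vectorSpan_add_one (Set.range_nonempty _) _ hcol
  rw [finrank_span_range_dihedral_permMat he.two_dvd] at this
  omega

/-- for even `n`, `dim DP_n = 2n - 3`. -/
theorem DP_dim_even (n : ℕ) [NeZero n] (hn : 4 ≤ n) (he : Even n) :
    Module.finrank ℝ (vectorSpan ℝ (DP n)) = 2 * n - 3 :=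
  DP_dim_even_general n he
end

section
/- For n odd, the dimension of DP_n = conv{M_σ : σ ∈ D_n} ⊆ ℝ^{n×n} is 2n − 2. -/
/-!
The elements of `D_n` are the maps `x ↦ x + k` and `x ↦ k - x`, whose permutation matrices
`Rₖ` and `Fₖ` have entries `[i - j = k]` and `[i + j = k]`. For odd `n` the map
`(i, j) ↦ (i - j, i + j)` is a bijection of `(ZMod n)²`, so a linear relation
`∑ aₖ Rₖ + ∑ bₖ Fₖ = 0` forces `aₖ + bₘ = 0` for all `k, m`: the only relation is
`∑ Rₖ = ∑ Fₖ`. Hence the `2n - 1` vertices other than `F₀` are linearly, and so affinely,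
independent, while `F₀ = ∑ Rₖ - ∑_{k ≠ 0} Fₖ` lies in their affine span.
-/

open Matrix Finset

variable (n : ℕ) [NeZero n]

theorem addRight_mem_dihedral {n : ℕ} (k : ZMod n) : Equiv.addRight k ∈ dihedral n := by
  have hpow : rot n ^ (ZMod.cast k : ℤ) = Equiv.addRight k := by
    simp [rot, Equiv.zsmul_addRight]
  exact hpow ▸ zpow_mem (Subgroup.subset_closure (by simp)) _

theorem subLeft_mem_dihedral {n : ℕ} (k : ZMod n) : Equiv.subLeft k ∈ dihedral n := by
  have hmul : Equiv.addRight k * rfl' n = Equiv.subLeft k := by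
    ext x; simp [rfl', neg_add_eq_sub]
  exact hmul ▸ mul_mem (addRight_mem_dihedral k) (Subgroup.subset_closure (by simp))

theorem mem_dihedral_iff {n : ℕ} {σ : Equiv.Perm (ZMod n)} :
    σ ∈ dihedral n ↔ ∃ k, σ = Equiv.addRight k ∨ σ = Equiv.subLeft k := by
  refine ⟨fun hσ => ?_, ?_⟩
  · induction hσ using Subgroup.closure_induction with
    | mem τ hτ =>
      rcases hτ with rfl | rfl
      · exact ⟨1, Or.inl rfl⟩
      · exact ⟨0, Or.inr (by ext x; simp [rfl'])⟩
    | one => exact ⟨0, Or.inl (by ext x; simp)⟩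
    | mul τ υ _ _ hτ hυ =>
      obtain ⟨a, rfl | rfl⟩ := hτ <;> obtain ⟨b, rfl | rfl⟩ := hυ
      · refine ⟨b + a, .inl (Equiv.ext fun x => ?_)⟩
        simp only [Equiv.Perm.coe_mul, Function.comp_apply, Equiv.coe_addRight, add_assoc]
      · refine ⟨b + a, .inr (Equiv.ext fun x => ?_)⟩
        simp only [Equiv.Perm.coe_mul, Function.comp_apply, Equiv.coe_addRight,
          Equiv.subLeft_apply]
        abel
      · refine ⟨a - b, .inr (Equiv.ext fun x => ?_)⟩
        simp only [Equiv.Perm.coe_mul, Function.comp_apply, Equiv.coe_addRight,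
          Equiv.subLeft_apply]
        abel
      · refine ⟨a - b, .inl (Equiv.ext fun x => ?_)⟩
        simp only [Equiv.Perm.coe_mul, Function.comp_apply, Equiv.coe_addRight,
          Equiv.subLeft_apply]
        abel
    | inv τ _ hτ =>
      obtain ⟨a, rfl | rfl⟩ := hτ
      · exact ⟨-a, Or.inl (by ext x; simp [Equiv.Perm.inv_def])⟩
      · exact ⟨a, Or.inr (by ext x; simp [Equiv.Perm.inv_def, Equiv.subLeft, neg_add_eq_sub])⟩
  · rintro ⟨k, rfl | rfl⟩
    · exact addRight_mem_dihedral k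
    · exact subLeft_mem_dihedral k

theorem sum_smul_permMat_addRight_apply {n : ℕ} [NeZero n] (a : ZMod n → ℝ) (i j : ZMod n) :
    (∑ k, a k • permMat n (Equiv.addRight k)) i j = a (i - j) := by
  rw [Matrix.sum_apply, Fintype.sum_eq_single (i - j) fun k hk => ?_]
  · simp [permMat]
  · simp only [Matrix.smul_apply, permMat, Matrix.of_apply, Equiv.coe_addRight, smul_eq_mul,
      mul_eq_zero]
    exact Or.inr (if_neg fun h => hk (eq_sub_of_add_eq' h.symm))

theorem sum_smul_permMat_subLeft_apply {n : ℕ} [NeZero n] (b : ZMod n → ℝ) (i j : ZMod n) :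
    (∑ k, b k • permMat n (Equiv.subLeft k)) i j = b (i + j) := by
  rw [Matrix.sum_apply, Fintype.sum_eq_single (i + j) fun k hk => ?_]
  · simp [permMat]
  · simp only [Matrix.smul_apply, permMat, Matrix.of_apply, Equiv.subLeft_apply, smul_eq_mul,
      mul_eq_zero]
    exact Or.inr (if_neg fun h => hk (eq_add_of_sub_eq h.symm))

theorem exists_sub_eq_and_add_eq {R : Type*} [CommRing R] (h2 : IsUnit (2 : R)) (x y : R) :
    ∃ i j : R, i - j = x ∧ i + j = y := by
  obtain ⟨u, hu⟩ := h2
  refine ⟨u⁻¹ * (y + x), u⁻¹ * (y - x), ?_, ?_⟩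
  · linear_combination x * u.inv_mul - (↑u⁻¹ : R) * x * hu
  · linear_combination y * u.inv_mul - (↑u⁻¹ : R) * y * hu

theorem add_eq_zero_of_sum_smul_permMat_eq_zero {n : ℕ} [NeZero n] (ho : Odd n)
    (a b : ZMod n → ℝ)
    (h : ∑ k, a k • permMat n (Equiv.addRight k) + ∑ k, b k • permMat n (Equiv.subLeft k) = 0)
    (k m : ZMod n) : a k + b m = 0 := by
  have h2 : IsUnit (2 : ZMod n) := by
    exact_mod_cast (ZMod.isUnit_iff_coprime 2 n).mpr (Nat.coprime_two_left.mpr ho)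
  obtain ⟨i, j, rfl, rfl⟩ := exists_sub_eq_and_add_eq h2 k m
  simpa [sum_smul_permMat_addRight_apply, sum_smul_permMat_subLeft_apply] using
    congrFun (congrFun h i) j

def dihedralAffineBasis (n : ℕ) : ZMod n ⊕ {k : ZMod n // k ≠ 0} → Matrix (ZMod n) (ZMod n) ℝ :=
  Sum.elim (fun k => permMat n (Equiv.addRight k)) (fun k => permMat n (Equiv.subLeft k))

theorem linearIndependent_dihedralAffineBasis {n : ℕ} [NeZero n] (ho : Odd n) :
    LinearIndependent ℝ (dihedralAffineBasis n) := by
  classical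
  rw [Fintype.linearIndependent_iff]
  intro g hg
  set b : ZMod n → ℝ := fun k => if h : k = 0 then 0 else g (.inr ⟨k, h⟩)
  have hb : ∀ k : {k : ZMod n // k ≠ 0}, b k = g (.inr k) := fun k => dif_neg k.2
  have hsum : ∑ k, b k • permMat n (Equiv.subLeft k) =
      ∑ k : {k : ZMod n // k ≠ 0}, g (.inr k) • permMat n (Equiv.subLeft k) := by
    rw [Fintype.sum_eq_add_sum_subtype_ne _ 0]
    simp only [hb, b, dite_true, zero_smul, zero_add]
  have hrel := add_eq_zero_of_sum_smul_permMat_eq_zero ho (g ∘ .inl) b (by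
    rw [hsum, ← hg, Fintype.sum_sum_type]
    rfl)
  have ha : ∀ k, g (.inl k) = 0 := fun k => by simpa [b] using hrel k 0
  rintro (k | k)
  · exact ha k
  · simpa [ha, hb] using hrel 0 k

theorem card_dihedralAffineBasis_index (n : ℕ) [NeZero n] :
    Fintype.card (ZMod n ⊕ {k : ZMod n // k ≠ 0}) = 2 * n - 2 + 1 := by
  have := NeZero.one_le (n := n)
  simp only [Fintype.card_sum, Fintype.card_subtype_compl, Fintype.card_unique, ZMod.card]
  omega

theorem sum_permMat_addRight_eq_sum_permMat_subLeft (n : ℕ) [NeZero n] :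
    ∑ k, permMat n (Equiv.addRight k) = ∑ k, permMat n (Equiv.subLeft k) := by
  ext i j
  simpa using (sum_smul_permMat_addRight_apply (fun _ => 1) i j).trans
    (sum_smul_permMat_subLeft_apply (fun _ => 1) i j).symm

theorem permMat_subLeft_zero_mem_affineSpan (n : ℕ) [NeZero n] :
    permMat n (Equiv.subLeft 0) ∈ affineSpan ℝ (Set.range (dihedralAffineBasis n)) := by
  set w : ZMod n ⊕ {k : ZMod n // k ≠ 0} → ℝ := Sum.elim (fun _ => 1) (fun _ => -1)
  have hw : ∑ i, w i = 1 := by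
    simp [w, Fintype.card_subtype_compl, Nat.cast_sub NeZero.one_le]
  have hcomb : Finset.univ.affineCombination ℝ (dihedralAffineBasis n) w =
      permMat n (Equiv.subLeft 0) := by
    rw [Finset.affineCombination_eq_linear_combination _ _ _ hw, Fintype.sum_sum_type]
    simp only [w, dihedralAffineBasis, Sum.elim_inl, Sum.elim_inr, one_smul, neg_one_smul,
      Finset.sum_neg_distrib]
    rw [sum_permMat_addRight_eq_sum_permMat_subLeft, Fintype.sum_eq_add_sum_subtype_ne _ 0]
    abel
  exact hcomb ▸ affineCombination_mem_affineSpan hw _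

theorem dihedral_permMat_eq_insert (n : ℕ) :
    {M | ∃ σ ∈ dihedral n, M = permMat n σ} =
      insert (permMat n (Equiv.subLeft 0)) (Set.range (dihedralAffineBasis n)) := by
  ext M
  simp only [Set.mem_ofPred_eq, mem_dihedral_iff, Set.mem_insert_iff, Set.mem_range, Sum.exists,
    dihedralAffineBasis, Sum.elim_inl, Sum.elim_inr, Subtype.exists]
  constructor
  · rintro ⟨σ, ⟨k, rfl | rfl⟩, rfl⟩
    · exact .inr (.inl ⟨k, rfl⟩)
    · obtain rfl | hk := eq_or_ne k 0
      · exact .inl rfl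
      · exact .inr (.inr ⟨k, hk, rfl⟩)
  · rintro (rfl | ⟨k, rfl⟩ | ⟨k, -, rfl⟩)
    · exact ⟨_, ⟨0, .inr rfl⟩, rfl⟩
    · exact ⟨_, ⟨k, .inl rfl⟩, rfl⟩
    · exact ⟨_, ⟨k, .inr rfl⟩, rfl⟩

theorem DP_dim_odd_general (n : ℕ) [NeZero n] (ho : Odd n) :
    Module.finrank ℝ (vectorSpan ℝ (DP n)) = 2 * n - 2 := by
  rw [DP, ← direction_affineSpan, affineSpan_convexHull, direction_affineSpan,
    dihedral_permMat_eq_insert, vectorSpan_insert_eq_vectorSpan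
      (permMat_subLeft_zero_mem_affineSpan n)]
  exact (linearIndependent_dihedralAffineBasis ho).affineIndependent.finrank_vectorSpan
    (card_dihedralAffineBasis_index n)

/-- for odd `n`, `dim DP_n = 2n - 2`. -/
theorem DP_dim_odd (n : ℕ) [NeZero n] (hn : 3 ≤ n) (ho : Odd n) :
    Module.finrank ℝ (vectorSpan ℝ (DP n)) = 2 * n - 2 :=
  DP_dim_odd_general n ho
end
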